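/- In the evaluation tree ET_M(t) of a closed term t under a set automaton M, for every node (s,p) and every successor (s',p.p') of (s,p), the position p.L(s) does not belong to the remaining work set W(s',p.p'). -/

import Mathlib

/-- A position is a finite list of positive natural numbers. -/
abbrev Pos : Type := List ℕ+

/-- `below p q` (written `p ≤ q` in the paper) holds iff `q` is a prefix of `p`. -/
def below (p q : Pos) : Prop := ∃ q'' : Pos, p = q ++ q''

/-- Terms over a signature `F`, with a single variable `ω` (patterns are linear). -/
inductive Tm (F : Type) : Type
  | var : Tm F
  | app : F → List (Tm F) → Tm F

variable {F : Type}

/-- Head symbol of a term (none for the variable). -/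
def hd : Tm F → Option F
  | .var => none
  | .app f _ => some f

/-- The subterm of `t` at position `p`, if `p` is in the domain of `t`. -/
def subtermAt : Tm F → Pos → Option (Tm F)
  | t, [] => some t
  | .var, _ :: _ => none
  | .app _ ts, i :: p => (ts[(i : ℕ) - 1]?).bind (fun u => subtermAt u p)

/-- The domain (set of positions) of a term. -/
def Dom (t : Tm F) : Set Pos := {p | (subtermAt t p).isSome}

/-- `t` is a closed term: it contains no variable. -/
def Closed (t : Tm F) : Prop := ∀ p u, subtermAt t p = some u → u ≠ Tm.var

/-- Terms that respect the arity function of the signature. -/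
inductive WF (ar : F → ℕ) : Tm F → Prop
  | var : WF ar Tm.var
  | app : ∀ f ts, ts.length = ar f → (∀ u ∈ ts, WF ar u) → WF ar (Tm.app f ts)

/-- Pattern `ℓ` matches term `t` at position `p`: for every non-variable
position `p'` of `ℓ`, the head symbols of `t[p.p']` and `ℓ[p']` agree. -/
def Matches (ℓ t : Tm F) (p : Pos) : Prop :=
  ∀ p' u, subtermAt ℓ p' = some u → u ≠ Tm.var →
    ∃ v, subtermAt t (p ++ p') = some v ∧ hd v = hd u

/-- A match obligation: a set of (subpattern, position) pairs. -/
abbrev Obl (F : Type) := Set (Tm F × Pos)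
/-- A match goal: a match obligation together with a match announcement. -/
abbrev Goal (F : Type) := Obl F × (Tm F × Pos)
/-- A state of the set automaton: a set of match goals. -/
abbrev St (F : Type) := Set (Goal F)

/-- The positions of a match obligation. -/
def posOf (mo : Obl F) : Set Pos := {p | ∃ u, (u, p) ∈ mo}

/-- All match obligation positions of a state. -/
def posMO (s : St F) : Set Pos := {p | ∃ g ∈ s, p ∈ posOf g.1}

/-- Reduction of a match obligation after observing a symbol of arity `n`
at position `p`: pairs at other positions are kept, and the pair at `p` is
replaced by obligations for its non-variable arguments. -/
def reduce (mo : Obl F) (n : ℕ) (p : Pos) : Obl F :=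
  {x | x ∈ mo ∧ x.2 ≠ p} ∪
  {x | ∃ (ℓ u : Tm F) (i : ℕ+), (ℓ, p) ∈ mo ∧ (i : ℕ) ≤ n ∧
        subtermAt ℓ [i] = some u ∧ u ≠ Tm.var ∧ x = (u, p ++ [i])}

/-- The `f`-derivative of state `s` labelled with position `lab`:
unchanged goals, reduced goals and fresh goals. -/
def derivS (pats : Set (Tm F)) (ar : F → ℕ) (s : St F) (lab : Pos) (f : F) : St F :=
  {g | g ∈ s ∧ lab ∉ posOf g.1} ∪
  {g | ∃ mo ma, (mo, ma) ∈ s ∧ (∃ ℓ, (ℓ, lab) ∈ mo ∧ hd ℓ = some f) ∧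
        reduce mo (ar f) lab ≠ ∅ ∧ g = (reduce mo (ar f) lab, ma)} ∪
  {g | ∃ (ℓ : Tm F) (i : ℕ+), ℓ ∈ pats ∧ (i : ℕ) ≤ ar f ∧
        g = ({(ℓ, lab ++ [i])}, (ℓ, lab ++ [i]))}

/-- The direct dependency relation: the obligation position sets intersect. -/
def dirDep (g₁ g₂ : Goal F) : Prop := (posOf g₁.1 ∩ posOf g₂.1).Nonempty

/-- `K` is an equivalence class of `X` under the transitive closure of the
direct dependency relation restricted to `X`. -/
def IsClass (X K : St F) : Prop :=
  ∃ g ∈ X, K = {g' | g' ∈ X ∧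
    Relation.ReflTransGen (fun a b => a ∈ X ∧ b ∈ X ∧ dirDep a b) g g'}

/-- The match announcement positions of a set of goals. -/
def posMA (K : St F) : Set Pos := {p | ∃ mo ℓ, (mo, (ℓ, p)) ∈ K}

/-- `g` is the greatest common prefix (join) of the set of positions `P`. -/
def IsGcp (P : Set Pos) (g : Pos) : Prop :=
  (∀ p ∈ P, below p g) ∧ ∀ r : Pos, (∀ p ∈ P, below p r) → below g r

/-- Lift a match goal by stripping the common prefix `g` from all positions. -/
def liftGoal (g : Pos) (x : Goal F) : Goal F :=
  ((fun y : Tm F × Pos => (y.1, y.2.drop g.length)) '' x.1,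
   (x.2.1, x.2.2.drop g.length))

/-- Lift a set of match goals. -/
def liftSt (g : Pos) (K : St F) : St F := liftGoal g '' K

/-- The transition function of the set automaton: `(s', p') ∈ delta pats ar L s f`
iff `s'` is the lifting of a dependency class `K` of the derivative and `p'` is
the greatest common prefix of the announcement positions of `K`. -/
def delta (pats : Set (Tm F)) (ar : F → ℕ) (L : St F → Pos) (s : St F) (f : F) :
    Set (St F × Pos) :=
  {x | ∃ K, IsClass (derivS pats ar s (L s) f) K ∧ IsGcp (posMA K) x.2 ∧
        x.1 = liftSt x.2 K}

/-- The initial state: all fresh root goals. -/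
def initSt (pats : Set (Tm F)) : St F :=
  {g | ∃ ℓ ∈ pats, g = ({(ℓ, ([] : Pos))}, (ℓ, ([] : Pos)))}

/-- Reachable states of the set automaton. -/
inductive Reachable (pats : Set (Tm F)) (ar : F → ℕ) (L : St F → Pos) : St F → Prop
  | init : Reachable pats ar L (initSt pats)
  | step : ∀ s f s' p, Reachable pats ar L s →
      (s', p) ∈ delta pats ar L s f → Reachable pats ar L s'

/-- The labelling function `L` picks, for every reachable state, an obligation
position of one of its root goals. -/
def RootLabel (pats : Set (Tm F)) (ar : F → ℕ) (L : St F → Pos) : Prop :=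
  ∀ s, Reachable pats ar L s →
    ∃ mo ℓ, (mo, (ℓ, ([] : Pos))) ∈ s ∧ L s ∈ posOf mo

/-- The nodes of the evaluation tree `ET_M(t)`. -/
inductive Node (pats : Set (Tm F)) (ar : F → ℕ) (L : St F → Pos) (t : Tm F) :
    St F → Pos → Prop
  | root : Node pats ar L t (initSt pats) []
  | step : ∀ s p f s' p', Node pats ar L t s p →
      (∃ v, subtermAt t (p ++ L s) = some v ∧ hd v = some f) →
      (s', p') ∈ delta pats ar L s f →
      Node pats ar L t s' (p ++ p')

/-- The edges of the evaluation tree `ET_M(t)`. -/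
def EdgeRel (pats : Set (Tm F)) (ar : F → ℕ) (L : St F → Pos) (t : Tm F)
    (s : St F) (p : Pos) (s' : St F) (q : Pos) : Prop :=
  Node pats ar L t s p ∧ ∃ f p',
    (∃ v, subtermAt t (p ++ L s) = some v ∧ hd v = some f) ∧
    (s', p') ∈ delta pats ar L s f ∧ q = p ++ p'

/-- The work set `W(s,p)`: the positions of `t` below the position pointer that
still have to be inspected. -/
def Work (t : Tm F) (s : St F) (p : Pos) : Set Pos :=
  {x | ∃ q, x = p ++ q ∧ x ∈ Dom t ∧ ∃ r ∈ posMO s, below q r}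

/-- The output function: match announcements whose obligation is completed by
observing `f` at the label position. -/
def outS (ar : F → ℕ) (L : St F → Pos) (s : St F) (f : F) : Set (Tm F × Pos) :=
  {ma | ({(Tm.app f (List.replicate (ar f) Tm.var), L s)}, ma) ∈ s}

/-!
Two facts about reachable states form an invariant of the automaton: every obligation
position of a goal extends the goal's announcement position, and the obligation positions
of a state form an antichain for the prefix order. In the derivative at the label `L s`
the label itself is replaced by its children `L s ++ [i]`, so by the antichain property no
obligation position of the derivative is a prefix of `L s`. A successor `(s', p')` lifts a
dependency class of the derivative by its gcp `p'`, so every `r ∈ posMO s'` comes from the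
obligation position `p' ++ r` of the derivative. If `p ++ L s` were in `W(s', p ++ p')`, we
would have `L s = p' ++ q` with `r` a prefix of `q`, making `p' ++ r` a prefix of `L s`.
-/

def ObligationsBelowAnnouncements (s : St F) : Prop :=
  ∀ g ∈ s, ∀ x ∈ g.1, g.2.2 <+: x.2

theorem below_iff_prefix {p q : Pos} : below p q ↔ q <+: p :=
  exists_congr fun _ => eq_comm

theorem IsClass.subset {X K : St F} (h : IsClass X K) : K ⊆ X := by
  obtain ⟨_, _, rfl⟩ := h
  exact fun _ hg => hg.1

theorem mem_posMA_of_mem {K : St F} {g : Goal F} (hg : g ∈ K) : g.2.2 ∈ posMA K :=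
  ⟨g.1, g.2.1, hg⟩

section Derivative

variable {pats : Set (Tm F)} {ar : F → ℕ} {s : St F} {lab : Pos} {f : F}

theorem mem_posMO_derivS {pp : Pos} (h : pp ∈ posMO (derivS pats ar s lab f)) :
    (pp ∈ posMO s ∧ pp ≠ lab) ∨ ∃ i : ℕ+, pp = lab ++ [i] := by
  obtain ⟨g, hg, u, hu⟩ := h
  rcases hg with (⟨hg, hlab⟩ | ⟨mo, ma, hmo, -, -, rfl⟩) | ⟨ℓ, i, -, -, rfl⟩
  · exact Or.inl ⟨⟨g, hg, u, hu⟩, fun he => hlab (he ▸ ⟨u, hu⟩)⟩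
  · rcases hu with ⟨hu, hne⟩ | ⟨_, _, i, -, -, -, -, hx⟩
    · exact Or.inl ⟨⟨(mo, ma), hmo, u, hu⟩, hne⟩
    · exact Or.inr ⟨i, congrArg Prod.snd hx⟩
  · exact Or.inr ⟨i, congrArg Prod.snd (Set.mem_singleton_iff.mp hu)⟩

theorem ObligationsBelowAnnouncements.derivS (hs : ObligationsBelowAnnouncements s) :
    ObligationsBelowAnnouncements (derivS pats ar s lab f) := by
  rintro g hg x hx
  rcases hg with (⟨hg, -⟩ | ⟨mo, ma, hmo, -, -, rfl⟩) | ⟨ℓ, i, -, -, rfl⟩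
  · exact hs g hg x hx
  · rcases hx with ⟨hx, -⟩ | ⟨ℓ, -, i, hℓ, -, -, -, rfl⟩
    · exact hs (mo, ma) hmo x hx
    · exact (hs (mo, ma) hmo (ℓ, lab) hℓ).trans (List.prefix_append _ _)
  · rw [Set.mem_singleton_iff.mp hx]

variable (hs : IsAntichain (· <+: ·) (posMO s)) (hlab : lab ∈ posMO s)
include hs hlab

theorem not_prefix_of_mem_posMO_derivS {pp : Pos}
    (h : pp ∈ posMO (derivS pats ar s lab f)) : ¬ pp <+: lab := by
  intro hpre
  rcases mem_posMO_derivS h with ⟨hold, hne⟩ | ⟨i, rfl⟩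
  · exact hne (hs.eq hold hlab hpre)
  · simpa using hpre.length_le

theorem isAntichain_posMO_derivS :
    IsAntichain (· <+: ·) (posMO (derivS pats ar s lab f)) := by
  intro p₁ h₁ p₂ h₂ hne hpre
  apply hne
  rcases mem_posMO_derivS h₂ with ⟨hold₂, hne₂⟩ | ⟨j, rfl⟩
  · rcases mem_posMO_derivS h₁ with ⟨hold₁, -⟩ | ⟨i, rfl⟩
    · exact hs.eq hold₁ hold₂ hpre
    · exact absurd (hs.eq hlab hold₂ ((List.prefix_append _ _).trans hpre)).symm hne₂
  · rcases List.prefix_concat_iff.mp hpre with heq | hpre'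
    · exact heq
    · exact absurd hpre' (not_prefix_of_mem_posMO_derivS hs hlab h₁)

end Derivative

theorem prefix_of_mem_posMO_of_isGcp {K : St F} {p' pq : Pos}
    (hK : ObligationsBelowAnnouncements K) (hgcp : IsGcp (posMA K) p')
    (h : pq ∈ posMO K) : p' <+: pq := by
  obtain ⟨g, hg, u, hu⟩ := h
  exact (below_iff_prefix.mp (hgcp.1 _ (mem_posMA_of_mem hg))).trans (hK g hg (u, pq) hu)

theorem exists_of_mem_posMO_liftSt {K : St F} {p' r : Pos} (h : r ∈ posMO (liftSt p' K)) :
    ∃ pq ∈ posMO K, pq.drop p'.length = r := by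
  obtain ⟨-, ⟨g, hg, rfl⟩, _, y, hy, hyeq⟩ := h
  exact ⟨y.2, ⟨g, hg, y.1, hy⟩, congrArg Prod.snd hyeq⟩

section Transition

variable {pats : Set (Tm F)} {ar : F → ℕ} {L : St F → Pos} {s s' : St F} {p' : Pos} {f : F}

theorem append_mem_posMO_derivS_of_mem_delta (hs : ObligationsBelowAnnouncements s)
    (hδ : (s', p') ∈ delta pats ar L s f) {r : Pos} (hr : r ∈ posMO s') :
    p' ++ r ∈ posMO (derivS pats ar s (L s) f) := by
  obtain ⟨K, hK, hgcp, hs'⟩ := hδ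
  obtain rfl : s' = liftSt p' K := hs'
  obtain ⟨pq, hpq, rfl⟩ := exists_of_mem_posMO_liftSt hr
  have hKs : ObligationsBelowAnnouncements K := fun g hg => hs.derivS g (hK.subset hg)
  rw [List.prefix_iff_eq_append.mp (prefix_of_mem_posMO_of_isGcp hKs hgcp hpq)]
  obtain ⟨g, hg, u, hu⟩ := hpq
  exact ⟨g, hK.subset hg, u, hu⟩

theorem ObligationsBelowAnnouncements.of_mem_delta (hs : ObligationsBelowAnnouncements s)
    (hδ : (s', p') ∈ delta pats ar L s f) : ObligationsBelowAnnouncements s' := by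
  obtain ⟨K, hK, -, hs'⟩ := hδ
  obtain rfl : s' = liftSt p' K := hs'
  rintro - ⟨g, hg, rfl⟩ - ⟨y, hy, rfl⟩
  exact (hs.derivS g (hK.subset hg) y hy).drop p'.length

theorem isAntichain_posMO_of_mem_delta (hs : ObligationsBelowAnnouncements s)
    (hanti : IsAntichain (· <+: ·) (posMO s)) (hlab : L s ∈ posMO s)
    (hδ : (s', p') ∈ delta pats ar L s f) : IsAntichain (· <+: ·) (posMO s') := by
  intro r₁ h₁ r₂ h₂ hne hpre
  refine hne (List.append_cancel_left (as := p') ?_)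
  exact (isAntichain_posMO_derivS hanti hlab).eq
    (append_mem_posMO_derivS_of_mem_delta hs hδ h₁)
    (append_mem_posMO_derivS_of_mem_delta hs hδ h₂)
    ((List.prefix_append_right_inj p').mpr hpre)

end Transition

section Reachable

variable {pats : Set (Tm F)} {ar : F → ℕ} {L : St F → Pos}

theorem Node.reachable {t : Tm F} {s : St F} {p : Pos} (h : Node pats ar L t s p) :
    Reachable pats ar L s := by
  induction h with
  | root => exact .init
  | step s _ f s' p' _ _ hδ ih => exact .step s f s' p' ih hδ

variable (hL : RootLabel pats ar L)
include hL

theorem RootLabel.mem_posMO {s : St F} (hr : Reachable pats ar L s) : L s ∈ posMO s := by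
  obtain ⟨mo, ℓ, hmem, hpos⟩ := hL s hr
  exact ⟨_, hmem, hpos⟩

theorem RootLabel.invariant {s : St F} (hr : Reachable pats ar L s) :
    ObligationsBelowAnnouncements s ∧ IsAntichain (· <+: ·) (posMO s) := by
  induction hr with
  | init =>
    refine ⟨?_, ?_⟩
    · rintro - ⟨ℓ, -, rfl⟩ x hx
      rw [Set.mem_singleton_iff.mp hx]
    · rintro p₁ ⟨g₁, ⟨ℓ₁, -, rfl⟩, u₁, hu₁⟩ p₂ ⟨g₂, ⟨ℓ₂, -, rfl⟩, u₂, hu₂⟩ hne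
      cases Set.mem_singleton_iff.mp hu₁
      cases Set.mem_singleton_iff.mp hu₂
      exact absurd rfl hne
  | step s f s' p hs hδ ih =>
    exact ⟨ih.1.of_mem_delta hδ, isAntichain_posMO_of_mem_delta ih.1 ih.2 (hL.mem_posMO hs) hδ⟩

end Reachable

theorem inspected_not_in_successor_work_general {F : Type} (pats : Set (Tm F))
    (ar : F → ℕ) (L : St F → Pos) (t : Tm F) (hL : RootLabel pats ar L) :
    ∀ (s : St F) (p : Pos) (s' : St F) (q : Pos),
      EdgeRel pats ar L t s p s' q → (p ++ L s) ∉ Work t s' q := by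
  rintro s p s' q ⟨hnode, f, p', -, hδ, rfl⟩ ⟨q', heq, -, r, hr, hbelow⟩
  have hreach := hnode.reachable
  obtain ⟨hs, hanti⟩ := hL.invariant hreach
  have hlabel : L s = p' ++ q' := List.append_cancel_left (heq.trans (List.append_assoc _ _ _))
  refine not_prefix_of_mem_posMO_derivS hanti (hL.mem_posMO hreach)
    (append_mem_posMO_derivS_of_mem_delta hs hδ hr) ?_
  rw [hlabel]
  exact (List.prefix_append_right_inj p').mpr (below_iff_prefix.mp hbelow)

/-- In the evaluation tree of a closed term `t`, for every node `(s,p)` and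
every successor `(s',p.p')`, the inspected position `p.L(s)` is not in the
remaining work set of the successor. -/
theorem inspected_not_in_successor_work {F : Type} (pats : Set (Tm F))
    (ar : F → ℕ) (L : St F → Pos) (t : Tm F) (hc : Closed t) (hw : WF ar t)
    (hpats : pats.Nonempty) (hWF : ∀ ℓ ∈ pats, WF ar ℓ)
    (hpv : ∀ ℓ ∈ pats, ℓ ≠ Tm.var) (hL : RootLabel pats ar L) :
    ∀ (s : St F) (p : Pos) (s' : St F) (q : Pos),
      EdgeRel pats ar L t s p s' q → (p ++ L s) ∉ Work t s' q :=
  inspected_not_in_successor_work_general pats ar L t hL
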